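/- For each n, d | n, and coprime x > y ≥ 1, let a = a(n,d,x,y) be any integer with y·a ≡ n/d (mod x), and set e(t) = exp(2πi·t). Define G₃(n) = Σ_{d | n} Σ_{x > y ≥ 1, gcd(x,y)=1, Y(n,d,x,y) > 1} (1/x)·Σ_{b=1}^{x−1} e(a·b/x)·Σ_{1 ≤ m < Y(n,d,x,y)} ( A(n,d,x) + B(x,y)·m )·e(−b·m/x) (this value does not depend on the choice of a). Then for every ε > 0 there is a constant K(ε) > 0 such that |G₃(n)| ≤ K(ε)·n^{3/2+ε} for all positive integers n. -/

import Mathlib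

/-- `Y(n,d,x,y) = min( n/(d(x+y)) , (n - d²x²)/(dy) )`. -/
noncomputable def Ybound (n d x y : ℕ) : ℝ :=
  min ((n : ℝ) / ((d : ℝ) * ((x : ℝ) + y)))
      (((n : ℝ) - (d : ℝ) ^ 2 * (x : ℝ) ^ 2) / ((d : ℝ) * y))

/-- `A(n,d,x) = n/(dx) + dx`. -/
noncomputable def Aterm (n d x : ℕ) : ℝ := (n : ℝ) / ((d : ℝ) * x) + (d : ℝ) * x

/-- `B(x,y) = -y/x`. -/
noncomputable def Bterm (x y : ℕ) : ℝ := -((y : ℝ) / x)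

/-- `e(t) = exp(2πi·t)`. -/
noncomputable def eChar (t : ℝ) : ℂ := Complex.exp (2 * Real.pi * Complex.I * t)

/-- `G₃(n)`, built from a choice `a` of solutions of `y·a ≡ n/d (mod x)`;
the inner sum `Σ_{1 ≤ m < Y}` runs over the integers `m` with `1 ≤ m < Y(n,d,x,y)`. -/
noncomputable def Gthree (a : ℕ → ℕ → ℕ → ℕ → ℤ) (n : ℕ) : ℂ :=
  ∑ d ∈ n.divisors,
    ∑' p : ℕ × ℕ,
      if p.2 < p.1 ∧ 1 ≤ p.2 ∧ Nat.gcd p.1 p.2 = 1 ∧ 1 < Ybound n d p.1 p.2 then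
        (1 / (p.1 : ℂ)) *
          ∑ b ∈ Finset.Ico 1 p.1,
            eChar (((a n d p.1 p.2 * b : ℤ) : ℝ) / p.1) *
              ∑ m ∈ Finset.Ico 1 ⌈Ybound n d p.1 p.2⌉₊,
                ((Aterm n d p.1 + Bterm p.1 p.2 * m : ℝ) : ℂ) *
                  eChar (-(((b : ℝ) * m) / p.1))
      else 0

/-!
After exchanging the sums over `b` and `m`, the sum over `b` is complete:
`(1/x) Σ_{b=1}^{x-1} e((a - m) b / x) = [x ∣ a - m] - 1/x`. A residue class mod `x` has
`t/x + O(1)` members in `[0, t)`, so these coefficients have partial sums bounded by `1`, and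
Abel summation against the linear weight `A + B m` bounds the `(d, x, y)`-term by
`2|A| + 2|B|⌈Y⌉ ≤ 8n/(dx)`. The term vanishes unless `y < x` and `dx < √n`; summing over `y` and
then over `x` leaves `8 n √n / d²`, and `Σ_{d ∣ n} 1/d² ≤ 2` gives `‖G₃(n)‖ ≤ 16 n^{3/2}`.
-/
open Finset

lemma eChar_add (s t : ℝ) : eChar (s + t) = eChar s * eChar t := by
  rw [eChar, eChar, eChar, ← Complex.exp_add]
  push_cast
  ring_nf

lemma eChar_intCast_div (x : ℕ) (k : ℤ) :
    eChar ((k : ℝ) / x) = Complex.exp (2 * Real.pi * Complex.I / x) ^ k := by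
  rw [eChar, ← Complex.exp_int_mul]
  push_cast
  ring_nf

lemma sum_range_eChar_mul_div {x : ℕ} (hx : 0 < x) (k : ℤ) :
    ∑ b ∈ range x, eChar (((k * b : ℤ) : ℝ) / x) = if (x : ℤ) ∣ k then (x : ℂ) else 0 := by
  have hω := Complex.isPrimitiveRoot_exp x hx.ne'
  set ω := Complex.exp (2 * Real.pi * Complex.I / x)
  have hpow : ∀ b : ℕ, eChar (((k * b : ℤ) : ℝ) / x) = (ω ^ k) ^ b := fun b => by
    rw [eChar_intCast_div, zpow_mul, zpow_natCast]
  simp_rw [hpow]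
  split_ifs with hdvd
  · simp [(hω.zpow_eq_one_iff_dvd k).2 hdvd]
  · have hne : ω ^ k ≠ 1 := fun h => hdvd ((hω.zpow_eq_one_iff_dvd k).1 h)
    have hx1 : (ω ^ k) ^ x = 1 := by
      rw [← zpow_natCast, ← zpow_mul, mul_comm, zpow_mul, zpow_natCast, hω.pow_eq_one, one_zpow]
    rw [geom_sum_eq hne, hx1, sub_self, zero_div]

noncomputable def centredDvdIndicator (x : ℕ) (k : ℤ) : ℝ :=
  (if (x : ℤ) ∣ k then 1 else 0) - 1 / x

lemma inv_mul_sum_Ico_eChar_mul_div {x : ℕ} (hx : 0 < x) (k : ℤ) :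
    1 / (x : ℂ) * ∑ b ∈ Ico 1 x, eChar (((k * b : ℤ) : ℝ) / x) = centredDvdIndicator x k := by
  have hsplit := sum_range_eChar_mul_div hx k
  rw [range_eq_Ico, sum_eq_sum_Ico_succ_bot hx] at hsplit
  have hx0 : (x : ℂ) ≠ 0 := by exact_mod_cast hx.ne'
  rw [centredDvdIndicator, eq_sub_of_add_eq' hsplit]
  split_ifs <;> simp [eChar]
  field_simp

lemma inv_mul_sum_eChar_mul_sum_eChar {x : ℕ} (hx : 0 < x) (a : ℤ) (s : Finset ℕ) (f : ℕ → ℂ) :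
    1 / (x : ℂ) * ∑ b ∈ Ico 1 x, eChar (((a * b : ℤ) : ℝ) / x) *
        ∑ m ∈ s, f m * eChar (-(((b : ℝ) * m) / x)) =
      ∑ m ∈ s, f m * centredDvdIndicator x (a - m) := by
  have hphase : ∀ b m : ℕ, eChar (((a * b : ℤ) : ℝ) / x) * eChar (-(((b : ℝ) * m) / x)) =
      eChar ((((a - m) * b : ℤ) : ℝ) / x) := fun b m => by
    rw [← eChar_add]
    push_cast
    ring_nf
  simp_rw [mul_sum, ← inv_mul_sum_Ico_eChar_mul_div hx, mul_sum, ← hphase]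
  rw [sum_comm]
  refine sum_congr rfl fun m _ => sum_congr rfl fun b _ => ?_
  ring

lemma abs_card_Ico_filter_modEq_sub_le {r : ℤ} (hr : 0 < r) {a b : ℤ} (hab : a ≤ b) (v : ℤ) :
    |(#{m ∈ Ico a b | m ≡ v [ZMOD r]} : ℝ) - (b - a) / r| ≤ 1 := by
  rw [← Int.cast_natCast, Int.Ico_filter_modEq_card a b hr v]
  set u := (b - v) / (r : ℚ)
  set w := (a - v) / (r : ℚ)
  have hwu : w ≤ u := div_le_div_of_nonneg_right (by simpa) (by exact_mod_cast hr.le)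
  have hlen : ((b - a) / r : ℝ) = ((u - w : ℚ) : ℝ) := by
    push_cast [u, w]
    field_simp
    ring
  rw [max_eq_left (sub_nonneg.2 (Int.ceil_mono hwu)), hlen]
  have key : |((⌈u⌉ - ⌈w⌉ : ℤ) : ℚ) - (u - w)| ≤ 1 := by
    have := Int.le_ceil u
    have := Int.le_ceil w
    have := Int.ceil_lt_add_one u
    have := Int.ceil_lt_add_one w
    rw [abs_le]
    push_cast
    constructor <;> linarith
  exact_mod_cast key

lemma card_range_filter_dvd_sub (x : ℕ) (a : ℤ) (k : ℕ) :
    #{m ∈ range k | (x : ℤ) ∣ a - ((m : ℕ) : ℤ)} = #{m ∈ Ico (0 : ℤ) k | m ≡ a [ZMOD x]} := by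
  refine card_nbij (fun m => (m : ℤ)) (fun m hm => ?_) (fun m _ m' _ h => by simpa using h)
    (fun m hm => ?_)
  · simp_all [Int.modEq_iff_dvd]
  · simp only [coe_filter, mem_Ico, Set.mem_ofPred_eq] at hm
    lift m to ℕ using hm.1.1
    exact ⟨m, by simp_all [Int.modEq_iff_dvd]⟩

lemma abs_sum_range_centredDvdIndicator_le {x : ℕ} (hx : 0 < x) (a : ℤ) (k : ℕ) :
    |∑ m ∈ range k, centredDvdIndicator x (a - m)| ≤ 1 := by
  have h :=
    abs_card_Ico_filter_modEq_sub_le (r := x) (by exact_mod_cast hx) (Int.natCast_nonneg k) a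
  convert h using 2
  simp only [centredDvdIndicator, sum_sub_distrib, sum_boole, card_range_filter_dvd_sub]
  simp [div_eq_mul_inv]

lemma abs_sum_Ico_linear_mul_le {c : ℕ → ℝ} {C : ℝ} (hc : ∀ k, |∑ i ∈ range k, c i| ≤ C)
    (A B : ℝ) (M : ℕ) :
    |∑ m ∈ Ico 1 M, (A + B * m) * c m| ≤ C * (2 * |A| + 2 * |B| * M) := by
  have hC : 0 ≤ C := by simpa using hc 0
  rcases le_or_gt M 1 with hM | hM
  · rw [Ico_eq_empty_of_le hM, sum_empty, abs_zero]
    positivity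
  set G : ℕ → ℝ := fun k => ∑ i ∈ range k, c i
  have hparts := sum_Ico_by_parts (fun m : ℕ => A + B * m) c hM
  simp only [smul_eq_mul, Nat.cast_add, Nat.cast_one, add_sub_add_left_eq_sub, mul_add, mul_one,
    add_sub_cancel_left, Nat.cast_sub hM.le] at hparts
  rw [hparts, ← mul_sum]
  have hG : ∀ k, |G k| ≤ C := hc
  have hsumG : |∑ i ∈ Ico 1 (M - 1), G (i + 1)| ≤ (M - 2) * C := by
    calc |∑ i ∈ Ico 1 (M - 1), G (i + 1)| ≤ ∑ i ∈ Ico 1 (M - 1), C :=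
          (abs_sum_le_sum_abs _ _).trans (sum_le_sum fun i _ => hG _)
      _ = (M - 2) * C := by
          rw [sum_const, Nat.card_Ico, nsmul_eq_mul, show M - 1 - 1 = M - 2 by omega,
            Nat.cast_sub hM]
          push_cast
          ring
  change |(A + B * (M - 1)) * G M - (A + B) * G 1 - B * ∑ i ∈ Ico 1 (M - 1), G (i + 1)| ≤ _
  have hM1 : (1 : ℝ) ≤ M := by exact_mod_cast hM.le
  have hfM : |A + B * (M - 1)| ≤ |A| + |B| * (M - 1) := by
    simpa [abs_mul, abs_of_nonneg (sub_nonneg.2 hM1)] using abs_add_le A (B * (M - 1))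
  calc _ ≤ |(A + B * (M - 1)) * G M| + |(A + B) * G 1| + |B * ∑ i ∈ Ico 1 (M - 1), G (i + 1)| :=
        (abs_sub _ _).trans (add_le_add_left (abs_sub _ _) _)
    _ ≤ (|A| + |B| * (M - 1)) * C + (|A| + |B|) * C + |B| * ((M - 2) * C) := by
        simp only [abs_mul]
        gcongr
        · exact hG M
        · exact abs_add_le A B
        · exact hG 1
    _ ≤ C * (2 * |A| + 2 * |B| * M) := by nlinarith [abs_nonneg B]

lemma lt_of_one_lt_Ybound {n d x y : ℕ} (h : 1 < Ybound n d x y) :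
    0 < (d : ℝ) * y ∧ (d : ℝ) * (x + y) < n ∧ (d : ℝ) ^ 2 * x ^ 2 + d * y < n := by
  have h₁ := h.trans_le (min_le_left _ _)
  have h₂ := h.trans_le (min_le_right _ _)
  rw [one_lt_div_iff] at h₁ h₂
  have hxy : (0 : ℝ) ≤ d * (x + y) := by positivity
  have hy : (0 : ℝ) ≤ d * y := by positivity
  refine ⟨?_, ?_, ?_⟩ <;> rcases h₁ with h₁ | h₁ <;> rcases h₂ with h₂ | h₂ <;> linarith

lemma abs_Aterm_le {n d x : ℕ} (h : ((d : ℝ) * x) ^ 2 ≤ n) :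
    |Aterm n d x| ≤ 2 * (n / (d * x)) := by
  rcases eq_or_lt_of_le (by positivity : (0 : ℝ) ≤ d * x) with h0 | h0
  · simp [Aterm, ← h0]
  have hdx : (d : ℝ) * x ≤ n / (d * x) := by
    rw [le_div_iff₀ h0]
    nlinarith
  rw [Aterm, abs_of_nonneg (by positivity)]
  linarith

lemma abs_Bterm_mul_ceil_Ybound_le {n d x y : ℕ} (hyx : y < x) (hY : 1 < Ybound n d x y) :
    |Bterm x y| * ⌈Ybound n d x y⌉₊ ≤ 2 * (n / (d * x)) := by
  obtain ⟨hdy, hxy, hdx⟩ := lt_of_one_lt_Ybound hY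
  have hx : (0 : ℝ) < x := by exact_mod_cast (Nat.zero_le y).trans_lt hyx
  have hd : (0 : ℝ) < d := pos_of_mul_pos_left hdy (Nat.cast_nonneg y)
  have hyx' : (y : ℝ) ≤ x := by exact_mod_cast hyx.le
  have hceil : (⌈Ybound n d x y⌉₊ : ℝ) ≤ n / (d * (x + y)) + 1 :=
    (Nat.ceil_lt_add_one (by linarith)).le.trans (by gcongr; exact min_le_left _ _)
  have hBY : (y : ℝ) / x * (n / (d * (x + y))) ≤ n / (d * x) := by
    rw [div_mul_div_comm, div_le_div_iff₀ (by positivity) (by positivity)]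
    have : (0 : ℝ) ≤ n * d * x ^ 2 := by positivity
    nlinarith
  have hone : (y : ℝ) / x ≤ n / (d * x) := by
    rw [div_le_div_iff₀ hx (by positivity)]
    nlinarith
  rw [Bterm, abs_neg, abs_of_nonneg (by positivity)]
  calc (y : ℝ) / x * ⌈Ybound n d x y⌉₊ ≤ y / x * (n / (d * (x + y)) + 1) := by gcongr
    _ ≤ 2 * (n / (d * x)) := by linarith

-- `Gthree a n = ∑ d ∈ n.divisors, ∑' p, gthreeSummand a n d p` holds by `rfl`.
noncomputable def gthreeSummand (a : ℕ → ℕ → ℕ → ℕ → ℤ) (n d : ℕ) (p : ℕ × ℕ) : ℂ :=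
  if p.2 < p.1 ∧ 1 ≤ p.2 ∧ Nat.gcd p.1 p.2 = 1 ∧ 1 < Ybound n d p.1 p.2 then
    (1 / (p.1 : ℂ)) *
      ∑ b ∈ Ico 1 p.1,
        eChar (((a n d p.1 p.2 * b : ℤ) : ℝ) / p.1) *
          ∑ m ∈ Ico 1 ⌈Ybound n d p.1 p.2⌉₊,
            ((Aterm n d p.1 + Bterm p.1 p.2 * m : ℝ) : ℂ) *
              eChar (-(((b : ℝ) * m) / p.1))
  else 0

noncomputable def gthreeMajorant (n d : ℕ) (p : ℕ × ℕ) : ℝ :=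
  if (d : ℝ) * p.1 < √n ∧ p.2 < p.1 then 8 * (n / (d * p.1)) else 0

lemma norm_gthreeSummand_le (a : ℕ → ℕ → ℕ → ℕ → ℤ) (n d : ℕ) (p : ℕ × ℕ) :
    ‖gthreeSummand a n d p‖ ≤ gthreeMajorant n d p := by
  obtain ⟨x, y⟩ := p
  unfold gthreeSummand
  split_ifs with h
  swap
  · rw [norm_zero, gthreeMajorant]
    split_ifs <;> positivity
  obtain ⟨hyx, -, -, hY⟩ := h
  dsimp only at hyx hY ⊢
  obtain ⟨hdy, -, hdx⟩ := lt_of_one_lt_Ybound hY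
  have hx : 0 < x := (Nat.zero_le y).trans_lt hyx
  have hdx' : ((d : ℝ) * x) ^ 2 < n := by linarith
  have hsqrt : (d : ℝ) * x < √n := Real.lt_sqrt (by positivity) |>.2 hdx'
  rw [gthreeMajorant, if_pos ⟨hsqrt, hyx⟩,
    inv_mul_sum_eChar_mul_sum_eChar hx _ _ fun m => ((Aterm n d x + Bterm x y * m : ℝ) : ℂ)]
  norm_cast
  rw [Real.norm_eq_abs]
  push_cast
  calc _ ≤ 1 * (2 * |Aterm n d x| + 2 * |Bterm x y| * ⌈Ybound n d x y⌉₊) :=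
        abs_sum_Ico_linear_mul_le (abs_sum_range_centredDvdIndicator_le hx _) _ _ _
    _ ≤ 8 * (n / (d * x)) := by
        linarith [abs_Aterm_le hdx'.le, abs_Bterm_mul_ceil_Ybound_le hyx hY]

lemma gthreeMajorant_eq_zero_of_notMem {n d : ℕ} (hd : 0 < d) {p : ℕ × ℕ}
    (hp : p ∉ range ⌈√n⌉₊ ×ˢ range ⌈√n⌉₊) : gthreeMajorant n d p = 0 := by
  refine if_neg fun ⟨hsqrt, hyx⟩ => hp ?_
  have hx : (p.1 : ℝ) < √n := by
    refine lt_of_le_of_lt (le_mul_of_one_le_left (Nat.cast_nonneg _) ?_) hsqrt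
    exact_mod_cast hd
  have hx' : p.1 < ⌈√n⌉₊ := Nat.lt_ceil.2 hx
  exact mem_product.2 ⟨mem_range.2 hx', mem_range.2 (hyx.trans hx')⟩

lemma card_filter_mul_lt_sqrt_le (n K : ℕ) {d : ℕ} (hd : 0 < d) :
    (#((range K).filter fun x : ℕ => 0 < x ∧ (d : ℝ) * x < √n) : ℝ) ≤ √n / d := by
  have hsub : (range K).filter (fun x : ℕ => 0 < x ∧ (d : ℝ) * x < √n) ⊆ Icc 1 ⌊√n / d⌋₊ :=
    fun x hx => by
    simp only [mem_filter, mem_Icc] at hx ⊢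
    refine ⟨hx.2.1, Nat.le_floor ?_⟩
    rw [le_div_iff₀ (by exact_mod_cast hd), mul_comm]
    exact hx.2.2.le
  calc _ ≤ (#(Icc 1 ⌊√n / d⌋₊) : ℝ) := by exact_mod_cast card_le_card hsub
    _ ≤ √n / d := by
        rw [Nat.card_Icc, Nat.add_sub_cancel]
        exact Nat.floor_le (by positivity)

lemma sum_range_ite_lt_le (K x : ℕ) {c : ℝ} (hc : 0 ≤ c) :
    ∑ y ∈ range K, (if y < x then c else 0) ≤ x * c := by
  rw [sum_ite, sum_const_zero, add_zero, sum_const, nsmul_eq_mul]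
  gcongr
  calc #{y ∈ range K | y < x} ≤ #(range x) :=
        card_le_card fun y hy => mem_range.2 (mem_filter.1 hy).2
    _ = x := card_range x

lemma sum_gthreeMajorant_le (n K : ℕ) {d : ℕ} (hd : 0 < d) :
    ∑ p ∈ range K ×ˢ range K, gthreeMajorant n d p ≤ 8 * n * √n / d ^ 2 := by
  have hcol : ∀ x ∈ range K, ∑ y ∈ range K, gthreeMajorant n d (x, y) ≤
      if 0 < x ∧ (d : ℝ) * x < √n then 8 * (n : ℝ) / d else 0 := fun x _ => by
    simp only [gthreeMajorant, ite_and]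
    split_ifs with hsqrt hx
    · refine (sum_range_ite_lt_le K x (by positivity)).trans (le_of_eq ?_)
      field_simp
    · obtain rfl : x = 0 := by omega
      simp
    · simp
    · simp
  calc ∑ p ∈ range K ×ˢ range K, gthreeMajorant n d p
      ≤ ∑ x ∈ range K, if 0 < x ∧ (d : ℝ) * x < √n then 8 * (n : ℝ) / d else 0 := by
        rw [sum_product]
        exact sum_le_sum hcol
    _ = #((range K).filter fun x : ℕ => 0 < x ∧ (d : ℝ) * x < √n) * (8 * n / d) := by
        rw [sum_ite, sum_const_zero, add_zero, sum_const, nsmul_eq_mul]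
    _ ≤ √n / d * (8 * n / d) := by
        gcongr
        exact card_filter_mul_lt_sqrt_le n K hd
    _ = 8 * n * √n / d ^ 2 := by ring

lemma norm_tsum_gthreeSummand_le (a : ℕ → ℕ → ℕ → ℕ → ℤ) (n : ℕ) {d : ℕ} (hd : 0 < d) :
    ‖∑' p, gthreeSummand a n d p‖ ≤ 8 * n * √n / d ^ 2 := by
  set S := range ⌈√n⌉₊ ×ˢ range ⌈√n⌉₊
  have hzero : ∀ p ∉ S, gthreeSummand a n d p = 0 := fun p hp =>
    norm_le_zero_iff.1 <|
      (norm_gthreeSummand_le a n d p).trans (gthreeMajorant_eq_zero_of_notMem hd hp).le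
  rw [tsum_eq_sum hzero]
  calc _ ≤ ∑ p ∈ S, ‖gthreeSummand a n d p‖ := norm_sum_le _ _
    _ ≤ ∑ p ∈ S, gthreeMajorant n d p := sum_le_sum fun p _ => norm_gthreeSummand_le a n d p
    _ ≤ _ := sum_gthreeMajorant_le n _ hd

lemma sum_divisors_inv_sq_le_two (n : ℕ) : ∑ d ∈ n.divisors, ((d : ℝ) ^ 2)⁻¹ ≤ 2 :=
  calc _ ≤ ∑ d ∈ Ioo 0 (n + 1), ((d : ℝ) ^ 2)⁻¹ :=
        sum_le_sum_of_subset_of_nonneg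
          (fun d hd =>
            mem_Ioo.2 ⟨Nat.pos_of_mem_divisors hd, Nat.lt_succ_of_le (Nat.divisor_le hd)⟩)
          (fun _ _ _ => by positivity)
    _ ≤ 2 / ((0 : ℕ) + 1) := sum_Ioo_inv_sq_le 0 (n + 1)
    _ = 2 := by norm_num

lemma norm_Gthree_le (a : ℕ → ℕ → ℕ → ℕ → ℤ) (n : ℕ) : ‖Gthree a n‖ ≤ 16 * (n * √n) :=
  calc ‖Gthree a n‖ ≤ ∑ d ∈ n.divisors, ‖∑' p, gthreeSummand a n d p‖ := norm_sum_le _ _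
    _ ≤ ∑ d ∈ n.divisors, 8 * n * √n * ((d : ℝ) ^ 2)⁻¹ := sum_le_sum fun d hd =>
        (norm_tsum_gthreeSummand_le a n (Nat.pos_of_mem_divisors hd)).trans_eq (div_eq_mul_inv _ _)
    _ = 8 * n * √n * ∑ d ∈ n.divisors, ((d : ℝ) ^ 2)⁻¹ := (mul_sum _ _ _).symm
    _ ≤ 8 * n * √n * 2 := by gcongr; exact sum_divisors_inv_sq_le_two n
    _ = 16 * (n * √n) := by ring

theorem stmt_6_general (a : ℕ → ℕ → ℕ → ℕ → ℤ) :
    ∀ ε : ℝ, 0 < ε → ∃ K : ℝ, 0 < K ∧ ∀ n : ℕ, 0 < n →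
      ‖Gthree a n‖ ≤ K * (n : ℝ) ^ ((3 : ℝ) / 2 + ε) := by
  intro ε hε
  refine ⟨16, by norm_num, fun n hn => (norm_Gthree_le a n).trans ?_⟩
  have hn1 : (1 : ℝ) ≤ n := by exact_mod_cast hn
  calc 16 * (n * √n) = 16 * (n : ℝ) ^ ((3 : ℝ) / 2) := by
        rw [Real.sqrt_eq_rpow, show (3 : ℝ) / 2 = 1 + 1 / 2 by norm_num,
          Real.rpow_add (by positivity), Real.rpow_one]
    _ ≤ 16 * (n : ℝ) ^ ((3 : ℝ) / 2 + ε) := by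
        gcongr
        linarith

theorem stmt_6 (a : ℕ → ℕ → ℕ → ℕ → ℤ)
    (ha : ∀ n d x y : ℕ, 0 < n → d ∣ n → y < x → 1 ≤ y → Nat.gcd x y = 1 →
      (y : ℤ) * a n d x y ≡ ((n / d : ℕ) : ℤ) [ZMOD (x : ℤ)]) :
    ∀ ε : ℝ, 0 < ε → ∃ K : ℝ, 0 < K ∧ ∀ n : ℕ, 0 < n →
      ‖Gthree a n‖ ≤ K * (n : ℝ) ^ ((3 : ℝ) / 2 + ε) :=
  stmt_6_general a
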